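/- arXiv:2103.10521 — 3 statements merged into one kernel-verified Lean document; each statement's English description precedes it below -/
import Mathlib

section
/- Let H be the horizontal plane {x ∈ ℝ³ : x₃ = z₀}, let c ∈ H, and let u, v ∈ ℝ³ be points with ‖u − c‖ ≤ r and ‖v − c‖ ≤ r, and suppose both points lie at vertical depth at least h below the plane, i.e., z₀ − u₃ ≥ h and z₀ − v₃ ≥ h, where 0 ≤ h ≤ r. Let u' = (u₁, u₂, z₀) be the vertical projection of u onto H. Then ‖u' − v‖ ≤ √(4r² − 3h²). -/
/-! The horizontal parts `a`, `b` of `u - c` and `v - c` satisfy `‖a - b‖² ≤ 2‖a‖² + 2‖b‖²`,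
and each has squared length at most `r² - h²` because the point lies at depth at least `h`
below the plane containing `c`. The vertical gap between `u'` and `v` is the depth of `v`,
whose square is absorbed by the remaining `-(z₀ - v₂)²`, leaving `4r² - 3h²`. -/

/-- Vertical projection onto the horizontal plane `{x : x 2 = z₀}`. -/
noncomputable def projZ (z₀ : ℝ) (u : EuclideanSpace ℝ (Fin 3)) : EuclideanSpace ℝ (Fin 3) :=
  WithLp.toLp 2 (fun i => if i = 2 then z₀ else u i)

lemma EuclideanSpace.norm_sq_fin_three (x : EuclideanSpace ℝ (Fin 3)) :
    ‖x‖ ^ 2 = x 0 ^ 2 + x 1 ^ 2 + x 2 ^ 2 := by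
  simp [EuclideanSpace.norm_sq_eq, Fin.sum_univ_three, Real.norm_eq_abs, sq_abs]

lemma norm_projZ_sub_sq (z₀ : ℝ) (u v : EuclideanSpace ℝ (Fin 3)) :
    ‖projZ z₀ u - v‖ ^ 2 = (u 0 - v 0) ^ 2 + (u 1 - v 1) ^ 2 + (z₀ - v 2) ^ 2 := by
  simp [EuclideanSpace.norm_sq_fin_three, projZ]

lemma norm_projZ_sub_sq_le {z₀ : ℝ} {c : EuclideanSpace ℝ (Fin 3)} (hc : c 2 = z₀)
    (u v : EuclideanSpace ℝ (Fin 3)) :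
    ‖projZ z₀ u - v‖ ^ 2
      ≤ 2 * ‖u - c‖ ^ 2 + 2 * ‖v - c‖ ^ 2 - 2 * (z₀ - u 2) ^ 2 - (z₀ - v 2) ^ 2 := by
  rw [norm_projZ_sub_sq, EuclideanSpace.norm_sq_fin_three, EuclideanSpace.norm_sq_fin_three]
  simp only [PiLp.sub_apply, hc]
  nlinarith [sq_nonneg (u 0 + v 0 - 2 * c 0), sq_nonneg (u 1 + v 1 - 2 * c 1)]

theorem stmt0_general (z₀ h r : ℝ) (c u v : EuclideanSpace ℝ (Fin 3))
    (hc : c 2 = z₀) (hu : ‖u - c‖ ≤ r) (hv : ‖v - c‖ ≤ r)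
    (hud : z₀ - u 2 ≥ h) (hvd : z₀ - v 2 ≥ h) (hh : 0 ≤ h) :
    ‖projZ z₀ u - v‖ ≤ Real.sqrt (4 * r ^ 2 - 3 * h ^ 2) := by
  have hu2 := pow_le_pow_left₀ (norm_nonneg _) hu 2
  have hv2 := pow_le_pow_left₀ (norm_nonneg _) hv 2
  have hud2 := pow_le_pow_left₀ hh hud 2
  have hvd2 := pow_le_pow_left₀ hh hvd 2
  apply Real.le_sqrt_of_sq_le
  calc ‖projZ z₀ u - v‖ ^ 2
      ≤ 2 * ‖u - c‖ ^ 2 + 2 * ‖v - c‖ ^ 2 - 2 * (z₀ - u 2) ^ 2 - (z₀ - v 2) ^ 2 :=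
        norm_projZ_sub_sq_le hc u v
    _ ≤ 4 * r ^ 2 - 3 * h ^ 2 := by linarith

theorem stmt0 (z₀ h r : ℝ) (c u v : EuclideanSpace ℝ (Fin 3))
    (hc : c 2 = z₀) (hu : ‖u - c‖ ≤ r) (hv : ‖v - c‖ ≤ r)
    (hud : z₀ - u 2 ≥ h) (hvd : z₀ - v 2 ≥ h) (hh : 0 ≤ h) (hhr : h ≤ r) :
    ‖projZ z₀ u - v‖ ≤ Real.sqrt (4 * r ^ 2 - 3 * h ^ 2) :=
  stmt0_general z₀ h r c u v hc hu hv hud hvd hh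
end

section
/- Let S be a finite nonempty set of points in a metric space and let c₁, …, c_m be the centers chosen by farthest point clustering from S (c₁ ∈ S arbitrary; cᵢ₊₁ is a point of S at maximum distance from {c₁, …, cᵢ}). Let r_m = max_{p ∈ S} min_{i ≤ m} d(p, cᵢ) be the final covering radius. Then the chosen centers are pairwise at distance at least r_m from each other. -/
/-- Distance from `p` to the nearest of the centers `c 0, …, c n`. -/
noncomputable def minDistTo {X : Type*} [MetricSpace X] {n : ℕ}
    (c : Fin (n + 1) → X) (p : X) : ℝ :=
  Finset.univ.inf' Finset.univ_nonempty fun i => dist p (c i)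

theorem stmt5 {X : Type*} [MetricSpace X] (S : Finset X) (hS : S.Nonempty)
    (m : ℕ) (c : Fin (m + 1) → X)
    (h0 : c 0 ∈ S)
    (hgreedy : ∀ i, ∀ hi : i < m,
      c ⟨i + 1, by omega⟩ ∈ S ∧
      ∀ p ∈ S,
        minDistTo (fun j : Fin (i + 1) => c (Fin.castLE (by omega) j)) p ≤
          minDistTo (fun j : Fin (i + 1) => c (Fin.castLE (by omega) j))
            (c ⟨i + 1, by omega⟩)) :
    ∀ i j : Fin (m + 1), i ≠ j →
      S.sup' hS (minDistTo c) ≤ dist (c i) (c j) := by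
  have key : ∀ i j : Fin (m + 1), i < j →
      S.sup' hS (minDistTo c) ≤ dist (c i) (c j) := by
    intro i j hij
    apply Finset.sup'_le
    intro p hp
    obtain ⟨k, hk⟩ : ∃ k, (j : ℕ) = k + 1 := ⟨(j : ℕ) - 1, by omega⟩
    have hk1 : k < m := by omega
    have hj : j = ⟨k + 1, by omega⟩ := Fin.ext hk
    obtain ⟨-, hg⟩ := hgreedy k hk1
    have h2 := hg p hp
    have h1 : minDistTo c p ≤
        minDistTo (fun t : Fin (k + 1) => c (Fin.castLE (by omega) t)) p := by
      apply Finset.le_inf'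
      intro t _
      exact Finset.inf'_le _ (Finset.mem_univ (Fin.castLE (by omega) t))
    have hik : (i : ℕ) < k + 1 := by omega
    have hcast : (Fin.castLE (by omega : k + 1 ≤ m + 1) (⟨(i : ℕ), hik⟩ : Fin (k + 1))) = i :=
      Fin.ext rfl
    have h3 : minDistTo (fun t : Fin (k + 1) => c (Fin.castLE (by omega) t))
        (c ⟨k + 1, by omega⟩) ≤ dist (c ⟨k + 1, by omega⟩) (c i) := by
      have := Finset.inf'_le (fun t : Fin (k + 1) =>
          dist (c ⟨k + 1, by omega⟩) (c (Fin.castLE (by omega) t)))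
        (Finset.mem_univ (⟨(i : ℕ), hik⟩ : Fin (k + 1)))
      rw [hcast] at this
      exact this
    calc minDistTo c p ≤ _ := h1
      _ ≤ _ := h2
      _ ≤ dist (c ⟨k + 1, by omega⟩) (c i) := h3
      _ = dist (c i) (c j) := by
          have hj' : (⟨k + 1, Nat.succ_lt_succ hk1⟩ : Fin (m + 1)) = j := Fin.ext hk.symm
          rw [hj', dist_comm]
  intro i j hne
  rcases lt_or_gt_of_ne hne with h | h
  · exact key i j h
  · rw [dist_comm]; exact key j i h
end

section
/- For 0 ≤ h ≤ r, the maximum of the function f(a, b) = (√(r² − a²) + √(r² − b²))² + b² over the square [h, r] × [h, r] equals 4r² − 3h², attained at a = b = h. -/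
theorem stmt18 (r h : ℝ) (hh : 0 ≤ h) (hhr : h ≤ r) :
    IsGreatest
      ((fun q : ℝ × ℝ =>
          (Real.sqrt (r ^ 2 - q.1 ^ 2) + Real.sqrt (r ^ 2 - q.2 ^ 2)) ^ 2 + q.2 ^ 2) ''
        (Set.Icc h r ×ˢ Set.Icc h r))
      (4 * r ^ 2 - 3 * h ^ 2) ∧
    (Real.sqrt (r ^ 2 - h ^ 2) + Real.sqrt (r ^ 2 - h ^ 2)) ^ 2 + h ^ 2 =
      4 * r ^ 2 - 3 * h ^ 2 := by
  have hr2 : (0:ℝ) ≤ r ^ 2 - h ^ 2 := by nlinarith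
  have hsq : Real.sqrt (r ^ 2 - h ^ 2) ^ 2 = r ^ 2 - h ^ 2 := Real.sq_sqrt hr2
  refine ⟨⟨⟨(h, h), ⟨⟨le_refl h, hhr⟩, le_refl h, hhr⟩, by simp; nlinarith⟩, ?_⟩, by nlinarith⟩
  rintro x ⟨⟨a, b⟩, ⟨⟨ha1, ha2⟩, hb1, hb2⟩, rfl⟩
  simp only
  have hA : Real.sqrt (r ^ 2 - a ^ 2) ≤ Real.sqrt (r ^ 2 - h ^ 2) :=
    Real.sqrt_le_sqrt (by nlinarith)
  have hB : Real.sqrt (r ^ 2 - b ^ 2) ≤ Real.sqrt (r ^ 2 - h ^ 2) :=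
    Real.sqrt_le_sqrt (by nlinarith)
  have hB0 : 0 ≤ Real.sqrt (r ^ 2 - b ^ 2) := Real.sqrt_nonneg _
  have hsa : Real.sqrt (r ^ 2 - a ^ 2) ^ 2 = r ^ 2 - a ^ 2 := Real.sq_sqrt (by nlinarith)
  have hsb : Real.sqrt (r ^ 2 - b ^ 2) ^ 2 = r ^ 2 - b ^ 2 := Real.sq_sqrt (by nlinarith)
  nlinarith [mul_le_mul hA hB hB0 (Real.sqrt_nonneg _)]
end
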